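/- Let Γ = [[R, 0], [M, S]] be a formal triangular matrix ring and (X, Y)_φ a Γ-module. Then there is a short exact sequence of Γ-modules 0 → (0, M⊗_R X)_0 → (X, M⊗_R X)_1 ⊕ (0, Y)_0 → (X, Y)_φ → 0, where the first map is (f_1, f_2) with f_1 = 0 and f_2(0, α) = (α, φ(α)), and the second map is (g_1, g_2) with g_1 = id_X and g_2(α, β) = φ(α) − β. -/

import Mathlib

set_option linter.unusedSectionVars false
set_option linter.unusedVariables false
set_option maxHeartbeats 1000000

open CategoryTheory Limits

attribute [local instance] CategoryTheory.Abelian.hasFiniteBiproducts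

noncomputable section

open scoped TensorProduct in
/-- The relations defining the tensor product `M ⊗_R X` of a right `R`-module `M`
and a left `R`-module `X` over the (possibly noncommutative) ring `R`, inside
`M ⊗_ℤ X`. They span an `S`-submodule when `M` is an `(S,R)`-bimodule. -/
def ncRel (R S M X : Type) [Ring R] [Ring S]
    [AddCommGroup M] [Module S M] [Module Rᵐᵒᵖ M] [SMulCommClass S Rᵐᵒᵖ M]
    [AddCommGroup X] [Module R X] : Submodule S (M ⊗[ℤ] X) :=
  Submodule.span S {z | ∃ (r : R) (m : M) (x : X),
    z = (MulOpposite.op r • m) ⊗ₜ[ℤ] x - m ⊗ₜ[ℤ] (r • x)}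

open scoped TensorProduct in
/-- The tensor product `M ⊗_R X` over a (possibly noncommutative) ring `R`, where
`M` is an `(S,R)`-bimodule and `X` a left `R`-module; it is a left `S`-module. -/
def NCTensor (R S M X : Type) [Ring R] [Ring S]
    [AddCommGroup M] [Module S M] [Module Rᵐᵒᵖ M] [SMulCommClass S Rᵐᵒᵖ M]
    [AddCommGroup X] [Module R X] : Type :=
  (M ⊗[ℤ] X) ⧸ ncRel R S M X

section NCTensorInst

open scoped TensorProduct

variable (R S M X : Type) [Ring R] [Ring S]
  [AddCommGroup M] [Module S M] [Module Rᵐᵒᵖ M] [SMulCommClass S Rᵐᵒᵖ M]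
  [AddCommGroup X] [Module R X]

instance : AddCommGroup (NCTensor R S M X) :=
  inferInstanceAs (AddCommGroup ((M ⊗[ℤ] X) ⧸ ncRel R S M X))

instance : Module S (NCTensor R S M X) :=
  inferInstanceAs (Module S ((M ⊗[ℤ] X) ⧸ ncRel R S M X))

/-- The elementary tensor `m ⊗ x` in `M ⊗_R X`. -/
def NCTensor.tmul (m : M) (x : X) : NCTensor R S M X :=
  Submodule.Quotient.mk (m ⊗ₜ[ℤ] x)

variable {R S M X}

lemma NCTensor.add_tmul (m m' : M) (x : X) :
    NCTensor.tmul R S M X (m + m') x =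
      NCTensor.tmul R S M X m x + NCTensor.tmul R S M X m' x := by
  show Submodule.Quotient.mk _ = _
  rw [TensorProduct.add_tmul]; rfl

lemma NCTensor.tmul_add (m : M) (x x' : X) :
    NCTensor.tmul R S M X m (x + x') =
      NCTensor.tmul R S M X m x + NCTensor.tmul R S M X m x' := by
  show Submodule.Quotient.mk _ = _
  rw [TensorProduct.tmul_add]; rfl

lemma NCTensor.smul_tmul (s : S) (m : M) (x : X) :
    NCTensor.tmul R S M X (s • m) x = s • NCTensor.tmul R S M X m x := by
  show Submodule.Quotient.mk _ = s • Submodule.Quotient.mk _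
  rw [← TensorProduct.smul_tmul']
  exact Submodule.Quotient.mk_smul _ _ _

lemma NCTensor.balance (r : R) (m : M) (x : X) :
    NCTensor.tmul R S M X (MulOpposite.op r • m) x = NCTensor.tmul R S M X m (r • x) := by
  show Submodule.Quotient.mk _ = Submodule.Quotient.mk _
  rw [Submodule.Quotient.eq]
  exact Submodule.subset_span ⟨r, m, x, rfl⟩

lemma NCTensor.zero_tmul (x : X) : NCTensor.tmul R S M X 0 x = 0 := by
  show Submodule.Quotient.mk _ = _
  rw [TensorProduct.zero_tmul]; rfl

lemma NCTensor.tmul_zero (m : M) : NCTensor.tmul R S M X m (0 : X) = 0 := by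
  show Submodule.Quotient.mk _ = _
  rw [TensorProduct.tmul_zero]; rfl

end NCTensorInst

/-- The formal (lower) triangular matrix ring `Γ = [[R, 0], [M, S]]` attached to
rings `R`, `S` and an `(S,R)`-bimodule `M`; the element `⟨r, m, s⟩` represents the
matrix `[[r, 0], [m, s]]`, with matrix addition and multiplication. -/
@[ext] structure TriMat (R M S : Type) where
  r : R
  m : M
  s : S

namespace TriMat

variable {R S M : Type} [Ring R] [Ring S]
  [AddCommGroup M] [Module S M] [Module Rᵐᵒᵖ M] [SMulCommClass S Rᵐᵒᵖ M]

/-- `TriMat R M S` is equivalent to the product `R × M × S`. -/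
def equivProd : TriMat R M S ≃ R × M × S where
  toFun a := (a.r, a.m, a.s)
  invFun p := ⟨p.1, p.2.1, p.2.2⟩
  left_inv _ := rfl
  right_inv _ := rfl

instance addCommGroup : AddCommGroup (TriMat R M S) := equivProd.addCommGroup

instance : One (TriMat R M S) := ⟨⟨1, 0, 1⟩⟩

/-- Matrix multiplication: `[[r,0],[m,s]] · [[r',0],[m',s']] = [[rr',0],[mr' + sm', ss']]`. -/
instance : Mul (TriMat R M S) :=
  ⟨fun a b => ⟨a.r * b.r, MulOpposite.op b.r • a.m + a.s • b.m, a.s * b.s⟩⟩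

@[simp] lemma add_r (a b : TriMat R M S) : (a + b).r = a.r + b.r := rfl
@[simp] lemma add_m (a b : TriMat R M S) : (a + b).m = a.m + b.m := rfl
@[simp] lemma add_s (a b : TriMat R M S) : (a + b).s = a.s + b.s := rfl
@[simp] lemma mul_r (a b : TriMat R M S) : (a * b).r = a.r * b.r := rfl
@[simp] lemma mul_m (a b : TriMat R M S) :
    (a * b).m = MulOpposite.op b.r • a.m + a.s • b.m := rfl
@[simp] lemma mul_s (a b : TriMat R M S) : (a * b).s = a.s * b.s := rfl
@[simp] lemma one_r : (1 : TriMat R M S).r = 1 := rfl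
@[simp] lemma one_m : (1 : TriMat R M S).m = 0 := rfl
@[simp] lemma one_s : (1 : TriMat R M S).s = 1 := rfl
@[simp] lemma zero_r : (0 : TriMat R M S).r = 0 := rfl
@[simp] lemma zero_m : (0 : TriMat R M S).m = 0 := rfl
@[simp] lemma zero_s : (0 : TriMat R M S).s = 0 := rfl

instance ring : Ring (TriMat R M S) where
  __ := addCommGroup
  mul := (· * ·)
  one := 1
  mul_assoc a b c := by
    ext <;> simp only [mul_r, mul_m, mul_s]
    · apply mul_assoc
    · simp only [smul_add, MulOpposite.op_mul, mul_smul]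
      rw [← smul_comm a.s (MulOpposite.op c.r) b.m]
      abel
    · apply mul_assoc
  one_mul a := by ext <;> simp
  mul_one a := by ext <;> simp
  left_distrib a b c := by
    ext <;> simp [mul_add, MulOpposite.op_add, add_smul, smul_add]
    abel
  right_distrib a b c := by
    ext <;> simp [add_mul, add_smul, smul_add]
    abel
  zero_mul a := by ext <;> simp
  mul_zero a := by ext <;> simp

end TriMat

section Triple

variable (R S M : Type) [Ring R] [Ring S]
  [AddCommGroup M] [Module S M] [Module Rᵐᵒᵖ M] [SMulCommClass S Rᵐᵒᵖ M]
  (X Y : Type) [AddCommGroup X] [Module R X] [AddCommGroup Y] [Module S Y]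

/-- The `Γ`-module `(X, Y)_φ` attached to a left `R`-module `X`, a left `S`-module
`Y` and an `S`-linear map `φ : M ⊗_R X → Y`, where `Γ = [[R,0],[M,S]]`; its
underlying abelian group is `X × Y`, with the `Γ`-action
`[[r,0],[m,s]] • (x, y) = (r • x, φ(m ⊗ x) + s • y)`. Every left `Γ`-module is of
this form: this is the standard identification of `Γ`-modules with triples. -/
def TripleMod (_φ : NCTensor R S M X →ₗ[S] Y) : Type := X × Y

variable (φ : NCTensor R S M X →ₗ[S] Y)

instance : AddCommGroup (TripleMod R S M X Y φ) := inferInstanceAs (AddCommGroup (X × Y))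

instance TripleMod.module : Module (TriMat R M S) (TripleMod R S M X Y φ) where
  smul g p := (g.r • p.1, φ (NCTensor.tmul R S M X g.m p.1) + g.s • p.2)
  one_smul p := by
    show ((1 : R) • p.1, φ (NCTensor.tmul R S M X 0 p.1) + (1 : S) • p.2) = p
    rw [NCTensor.zero_tmul, map_zero, one_smul, one_smul, zero_add]
    rfl
  mul_smul g h p := by
    show ((g.r * h.r) • p.1,
        φ (NCTensor.tmul R S M X (MulOpposite.op h.r • g.m + g.s • h.m) p.1)
          + (g.s * h.s) • p.2)
      = (g.r • (h.r • p.1),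
        φ (NCTensor.tmul R S M X g.m (h.r • p.1))
          + g.s • (φ (NCTensor.tmul R S M X h.m p.1) + h.s • p.2))
    rw [NCTensor.add_tmul, NCTensor.balance, NCTensor.smul_tmul, map_add, map_smul,
      mul_smul, mul_smul, smul_add]
    ext
    · rfl
    · show _ + _ = _
      abel
  smul_zero g := by
    show (g.r • (0 : X), φ (NCTensor.tmul R S M X g.m 0) + g.s • (0 : Y)) = 0
    rw [NCTensor.tmul_zero, map_zero, smul_zero, smul_zero, add_zero]
    rfl
  smul_add g p q := by
    show (g.r • (p.1 + q.1), φ (NCTensor.tmul R S M X g.m (p.1 + q.1)) + g.s • (p.2 + q.2))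
      = (g.r • p.1 + g.r • q.1,
          (φ (NCTensor.tmul R S M X g.m p.1) + g.s • p.2)
            + (φ (NCTensor.tmul R S M X g.m q.1) + g.s • q.2))
    rw [NCTensor.tmul_add, map_add, smul_add, smul_add]
    ext
    · rfl
    · show _ + _ = _
      abel
  add_smul g h p := by
    show ((g.r + h.r) • p.1, φ (NCTensor.tmul R S M X (g.m + h.m) p.1) + (g.s + h.s) • p.2)
      = (g.r • p.1 + h.r • p.1,
          (φ (NCTensor.tmul R S M X g.m p.1) + g.s • p.2)
            + (φ (NCTensor.tmul R S M X h.m p.1) + h.s • p.2))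
    rw [NCTensor.add_tmul, map_add, add_smul, add_smul]
    ext
    · rfl
    · show _ + _ = _
      abel
  zero_smul p := by
    show ((0 : R) • p.1, φ (NCTensor.tmul R S M X 0 p.1) + (0 : S) • p.2) = 0
    rw [NCTensor.zero_tmul, map_zero, zero_smul, zero_smul, add_zero]
    rfl

@[simp] lemma TripleMod.smul_def (g : TriMat R M S) (p : TripleMod R S M X Y φ) :
    g • p = (g.r • p.1, φ (NCTensor.tmul R S M X g.m p.1) + g.s • p.2) := rfl

@[simp] lemma TripleMod.add_def (p q : TripleMod R S M X Y φ) :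
    p + q = (p.1 + q.1, p.2 + q.2) := rfl

end Triple


section Ses13

variable (R S M : Type) [Ring R] [Ring S]
  [AddCommGroup M] [Module S M] [Module Rᵐᵒᵖ M] [SMulCommClass S Rᵐᵒᵖ M]
  (X Y : Type) [AddCommGroup X] [Module R X] [AddCommGroup Y] [Module S Y]
  (φ : NCTensor R S M X →ₗ[S] Y)

/-- The first map of the standard sequence: `f = (f₁, f₂)` with `f₁ = 0` and
`f₂(α) = (α, φ(α))`, from the `Γ`-module `(0, M ⊗_R X)_0` to
`(X, M ⊗_R X)_1 ⊕ (0, Y)_0`. -/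
def sesF : TripleMod R S M PUnit (NCTensor R S M X) 0 →ₗ[TriMat R M S]
    TripleMod R S M X (NCTensor R S M X) LinearMap.id × TripleMod R S M PUnit Y 0 where
  toFun p := ((0, p.2), (PUnit.unit, φ p.2))
  map_add' p q := by
    refine Prod.ext (Prod.ext ?_ ?_) (Prod.ext ?_ ?_) <;>
      simp [TripleMod.add_def, map_add] <;> erw [TripleMod.add_def] <;> simp
  map_smul' g p := by
    refine Prod.ext (Prod.ext ?_ ?_) (Prod.ext ?_ ?_) <;>
      simp [TripleMod.smul_def, NCTensor.tmul_zero, map_add, map_smul] <;> erw [TripleMod.smul_def] <;> simp [NCTensor.tmul_zero]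

/-- The second map of the standard sequence: `g = (g₁, g₂)` with `g₁ = id_X` and
`g₂(α, β) = φ(α) - β`, from `(X, M ⊗_R X)_1 ⊕ (0, Y)_0` to `(X, Y)_φ`. -/
def sesG : (TripleMod R S M X (NCTensor R S M X) LinearMap.id ×
    TripleMod R S M PUnit Y 0) →ₗ[TriMat R M S] TripleMod R S M X Y φ where
  toFun p := (p.1.1, φ p.1.2 - p.2.2)
  map_add' p q := by
    refine Prod.ext ?_ ?_ <;>
      simp [TripleMod.add_def, map_add] <;> erw [TripleMod.add_def] <;> simp <;> abel
  map_smul' g p := by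
    refine Prod.ext ?_ ?_ <;>
      simp [TripleMod.smul_def, NCTensor.tmul_zero, map_add, map_smul, smul_sub] <;> erw [TripleMod.smul_def] <;> simp [smul_sub] <;> abel

lemma sesF_injective : Function.Injective (sesF R S M X Y φ) := fun p q h =>
  Prod.ext (Subsingleton.elim _ _) (congrArg (fun z => z.1.2) h)

lemma sesG_surjective : Function.Surjective (sesG R S M X Y φ) := fun y =>
  ⟨((y.1, 0), (PUnit.unit, -y.2)), by
    show ((y.1, φ 0 - -y.2) : X × Y) = y
    rw [map_zero, zero_sub, neg_neg]
    rfl⟩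

lemma exact_sesF_sesG : Function.Exact (sesF R S M X Y φ) (sesG R S M X Y φ) := by
  rintro ⟨⟨x, α⟩, ⟨⟩, β⟩
  show ((x, φ α - β) : X × Y) = 0 ↔ ∃ p : TripleMod R S M PUnit (NCTensor R S M X) 0,
    ((((0 : X), p.2), (PUnit.unit, φ p.2)) : (X × NCTensor R S M X) × PUnit × Y) =
      ((x, α), (PUnit.unit, β))
  simp only [Prod.mk_eq_zero, sub_eq_zero, Prod.mk.injEq, true_and]
  constructor
  · rintro ⟨rfl, rfl⟩
    exact ⟨(PUnit.unit, α), ⟨rfl, rfl⟩, rfl⟩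
  · rintro ⟨p, ⟨rfl, rfl⟩, rfl⟩
    exact ⟨rfl, rfl⟩

/-- **The standard short exact sequence of a `Γ`-module.** For a formal triangular
matrix ring `Γ = [[R,0],[M,S]]` and a `Γ`-module `(X, Y)_φ`, the sequence
`0 → (0, M ⊗_R X)_0 → (X, M ⊗_R X)_1 ⊕ (0, Y)_0 → (X, Y)_φ → 0`
is a short exact sequence of `Γ`-modules, where the maps are `f = (0, α ↦ (α, φ α))`
and `g = (id_X, (α, β) ↦ φ(α) − β)`. -/
theorem triMat_standard_ses :
    Function.Injective (sesF R S M X Y φ) ∧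
    Function.Exact (sesF R S M X Y φ) (sesG R S M X Y φ) ∧
    Function.Surjective (sesG R S M X Y φ) :=
  ⟨sesF_injective R S M X Y φ, exact_sesF_sesG R S M X Y φ, sesG_surjective R S M X Y φ⟩

end Ses13

end
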